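/- Eventually uniformly most accurate: Suppose the rate-function family satisfies the growth conditions (G1) and (G2), I_θ(0) = 0 for all θ ∈ Θ, J : Θ → ℝ is uniformly continuous on bounded subsets of Θ, the LDP lower bound holds at every θ ∈ Θ, and either Θ is open in E or θ̂_T takes values in Θ for all T. Fix r > 0 and δ > 0. Let (H̲_T)_{T>0} and (H̄_T)_{T>0} be eventually equicontinuous families of Borel measurable functions E → ℝ satisfying, for every θ ∈ Θ, limsup_{T→∞} (1/b_T) log P_θ(J(θ) ∉ [H̲_T(θ̂_T), H̄_T(θ̂_T)]) ≤ −r. Let θ0, θ̃0 ∈ Θ with J(θ̃0) ≠ J(θ0), suppose θ̂_T → θ0 in P_{θ0}-probability, and suppose the family (θ̂_T) is tight under P_{θ0} (for every ε > 0 there exist a compact K ⊆ E and T0 with P_{θ0}(θ̂_T ∉ K) ≤ ε for all T ≥ T0). Then limsup_{T→∞} [P_{θ0}(J(θ̃0) ≤ J̄^δ_{T,r}(θ̂_T)) − P_{θ0}(J(θ̃0) ≤ H̄_T(θ̂_T))] ≤ 0 and limsup_{T→∞} [P_{θ0}(J(θ̃0) ≥ J̲^δ_{T,r}(θ̂_T))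 − P_{θ0}(J(θ̃0) ≥ H̲_T(θ̂_T))] ≤ 0 (assuming each J̄^δ_{T,r} and J̲^δ_{T,r} is Borel measurable). -/

import Mathlib

set_option autoImplicit false

open Filter Topology Metric Set MeasureTheory

noncomputable section

variable {E : Type*} [NormedAddCommGroup E] [NormedSpace ℝ E]

/-- The sublevel set `S_{θ,r} = {ϑ ∈ E : I_θ(ϑ) ≤ r}` of the rate function. -/
def sublevelSet (I : E → E → ENNReal) (θ : E) (r : ℝ) : Set E :=
  {ϑ : E | I θ ϑ ≤ ENNReal.ofReal r}

/-- The open `δ`-fattening `S^δ_{θ,r}` of the sublevel set, where `S^0_{θ,r} = S_{θ,r}`;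
for `δ > 0` it is the set of points at distance `< δ` from `S_{θ,r}`, i.e. the union of
open balls of radius `δ` around points of `S_{θ,r}`. -/
def fatSublevel (I : E → E → ENNReal) (θ : E) (r δ : ℝ) : Set E :=
  if δ = 0 then sublevelSet I θ r
  else ⋃ ϑ ∈ sublevelSet I θ r, Metric.ball ϑ δ

/-- Growth condition (G1): for sequences `θ_n ∈ Θ` with `sup_n ‖θ_n‖ < ∞` and
`‖ϑ_n‖ → ∞`, `I_{θ_n}(ϑ_n) → ∞`. -/
def GrowthG1 (Θ : Set E) (I : E → E → ENNReal) : Prop :=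
  ∀ θs ϑs : ℕ → E, (∀ n, θs n ∈ Θ) → (∃ C : ℝ, ∀ n, ‖θs n‖ ≤ C) →
    Tendsto (fun n => ‖ϑs n‖) atTop atTop →
    Tendsto (fun n => I (θs n) (ϑs n)) atTop (nhds ⊤)

/-- Growth condition (G2): for sequences `θ_n ∈ Θ` with `‖θ_n‖ → ∞` and
`‖ϑ_n‖/‖θ_n‖ → ∞`, `limsup_n I_{θ_n}(ϑ_n) = ∞`. -/
def GrowthG2 (Θ : Set E) (I : E → E → ENNReal) : Prop :=
  ∀ θs ϑs : ℕ → E, (∀ n, θs n ∈ Θ) →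
    Tendsto (fun n => ‖θs n‖) atTop atTop →
    Tendsto (fun n => ‖ϑs n‖ / ‖θs n‖) atTop atTop →
    Filter.limsup (fun n => I (θs n) (ϑs n)) atTop = ⊤

/-- The upper confidence bound `J̄^δ_{T,r}(θ') = sup {J(θ) : θ ∈ Θ, a_T (θ' - θ) ∈ S^δ_{θ,r}}`. -/
def upperCB (Θ : Set E) (I : E → E → ENNReal) (J : E → ℝ) (r δ : ℝ) (a : ℝ → ℝ)
    (T : ℝ) (θ' : E) : ℝ :=
  sSup (J '' {θ : E | θ ∈ Θ ∧ a T • (θ' - θ) ∈ fatSublevel I θ r δ})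

/-- The lower confidence bound `J̲^δ_{T,r}(θ') = inf {J(θ) : θ ∈ Θ, a_T (θ' - θ) ∈ S^δ_{θ,r}}`. -/
def lowerCB (Θ : Set E) (I : E → E → ENNReal) (J : E → ℝ) (r δ : ℝ) (a : ℝ → ℝ)
    (T : ℝ) (θ' : E) : ℝ :=
  sInf (J '' {θ : E | θ ∈ Θ ∧ a T • (θ' - θ) ∈ fatSublevel I θ r δ})

variable {Ω : Type*} [MeasurableSpace Ω]

/-- LDP lower bound at `θ0` for the family `a_T (θ̂_T − θ0)` with speed `b_T`:
for every open `G ⊆ E`,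
`liminf_{T→∞} (1/b_T) log P(a_T(θ̂_T − θ0) ∈ G) ≥ − inf_{ϑ ∈ G} I(ϑ)`. -/
def LDPLowerAt (P : Measure Ω) (θhat : ℝ → Ω → E) (a b : ℝ → ℝ)
    (Irate : E → ENNReal) (θ0 : E) : Prop :=
  ∀ G : Set E, IsOpen G →
    -(((⨅ ϑ ∈ G, Irate ϑ) : ENNReal) : EReal) ≤
      Filter.liminf
        (fun T => (((b T)⁻¹ : ℝ) : EReal) *
          ENNReal.log (P {ω | a T • (θhat T ω - θ0) ∈ G})) atTop

/-- LDP upper bound at `θ0` for the family `a_T (θ̂_T − θ0)` with speed `b_T`: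
for every closed `F ⊆ E`,
`limsup_{T→∞} (1/b_T) log P(a_T(θ̂_T − θ0) ∈ F) ≤ − inf_{ϑ ∈ F} I(ϑ)`. -/
def LDPUpperAt (P : Measure Ω) (θhat : ℝ → Ω → E) (a b : ℝ → ℝ)
    (Irate : E → ENNReal) (θ0 : E) : Prop :=
  ∀ F : Set E, IsClosed F →
    Filter.limsup
      (fun T => (((b T)⁻¹ : ℝ) : EReal) *
        ENNReal.log (P {ω | a T • (θhat T ω - θ0) ∈ F})) atTop ≤
      -(((⨅ ϑ ∈ F, Irate ϑ) : ENNReal) : EReal)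

/-- Eventual equi-upper semicontinuity at a point. -/
def EvEquiUSCAt {W : Type*} [PseudoMetricSpace W] (φ : ℝ → W → ℝ) (w0 : W) : Prop :=
  ∀ ε > (0 : ℝ), ∃ δ > (0 : ℝ), ∃ T0 > (0 : ℝ),
    ∀ T ≥ T0, ∀ w ∈ Metric.closedBall w0 δ, φ T w - φ T w0 < ε

/-- Eventual equi-lower semicontinuity at a point: `(−φ_T)` is eventually equi-u.s.c. -/
def EvEquiLSCAt {W : Type*} [PseudoMetricSpace W] (φ : ℝ → W → ℝ) (w0 : W) : Prop :=
  EvEquiUSCAt (fun T w => -φ T w) w0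

/-- Eventual equicontinuity at a point. -/
def EvEquicontinuousAt {W : Type*} [PseudoMetricSpace W] (φ : ℝ → W → ℝ) (w0 : W) : Prop :=
  ∀ ε > (0 : ℝ), ∃ δ > (0 : ℝ), ∃ T0 > (0 : ℝ),
    ∀ T ≥ T0, ∀ w ∈ Metric.closedBall w0 δ, |φ T w - φ T w0| < ε

/-!
Since `J θ̃0 ≠ J θ0`, one term of each difference is harmless. When `J θ̃0 < J θ0` (say), the
competitor's interval contains `J θ0` with probability tending to one by exponential accuracy
at `θ0`, so `P(J θ̃0 ≤ H̄_T(θ̂_T)) → 1`; and `P(J θ̃0 ≥ J̲(θ̂_T)) → 0` because the confidence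
bounds concentrate at `J θ0`: as `a_T → ∞`, the growth conditions force every `θ` with
`a_T (θ̂_T - θ) ∈ S^δ_{θ,r}` close to `θ̂_T`, uniformly for `θ̂_T` near `θ0`, and `θ̂_T` itself is
such a `θ` since `I_θ(0) = 0`; continuity of `J` and consistency of `θ̂_T` do the rest.
-/

open scoped ENNReal

lemma limsup_coe_le_zero_of_eventually_le {u v : ℝ → ℝ} (huv : ∀ᶠ T in atTop, u T ≤ v T)
    (hv : Tendsto v atTop (𝓝 0)) : limsup (fun T => (u T : EReal)) atTop ≤ 0 := by
  have hv' : Tendsto (fun T => (v T : EReal)) atTop (𝓝 0) := by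
    simpa using EReal.tendsto_coe.2 hv
  calc limsup (fun T => (u T : EReal)) atTop
      ≤ limsup (fun T => (v T : EReal)) atTop :=
        limsup_le_limsup (huv.mono fun T h => EReal.coe_le_coe_iff.2 h)
    _ = 0 := hv'.limsup_eq

/-- An exponential rate `-r < 0` forces `μ T ≤ exp (-(r/2) b T)` eventually. -/
lemma tendsto_toReal_zero_of_limsup_log_le {μ : ℝ → ℝ≥0∞} {b : ℝ → ℝ} {r : ℝ}
    (hμ : ∀ T, μ T ≠ ∞) (hb : Tendsto b atTop atTop) (hr : 0 < r)
    (h : limsup (fun T => (((b T)⁻¹ : ℝ) : EReal) * ENNReal.log (μ T)) atTop ≤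
      ((-r : ℝ) : EReal)) :
    Tendsto (fun T => (μ T).toReal) atTop (𝓝 0) := by
  have hlt : ∀ᶠ T in atTop,
      (((b T)⁻¹ : ℝ) : EReal) * ENNReal.log (μ T) < ((-r / 2 : ℝ) : EReal) :=
    eventually_lt_of_limsup_lt (h.trans_lt (EReal.coe_lt_coe_iff.2 (by linarith)))
  refine squeeze_zero' (Eventually.of_forall fun T => ENNReal.toReal_nonneg) ?_
    (Real.tendsto_exp_atBot.comp (hb.const_mul_atTop_of_neg (by linarith : -r / 2 < 0)))
  filter_upwards [hlt, hb.eventually_gt_atTop 0] with T hT hbT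
  rcases eq_or_ne (μ T) 0 with h0 | h0
  · simp only [h0, ENNReal.toReal_zero, Function.comp_apply]
    positivity
  rw [ENNReal.log_pos_real h0 (hμ T), ← EReal.coe_mul, EReal.coe_lt_coe_iff,
    inv_mul_lt_iff₀ hbT] at hT
  calc (μ T).toReal = Real.exp (Real.log (μ T).toReal) :=
        (Real.exp_log (ENNReal.toReal_pos h0 (hμ T))).symm
    _ ≤ Real.exp (-r / 2 * b T) := Real.exp_le_exp.2 (by linarith)

section Probability

variable {μ : Measure Ω}

lemma limsup_measureReal_sub_le_zero_of_subset [IsFiniteMeasure μ] {A F : ℝ → Set Ω}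
    (B : ℝ → Set Ω) (hAF : ∀ᶠ T in atTop, A T ⊆ F T)
    (hF : Tendsto (fun T => μ.real (F T)) atTop (𝓝 0)) :
    limsup (fun T => ((μ.real (A T) - μ.real (B T) : ℝ) : EReal)) atTop ≤ 0 :=
  limsup_coe_le_zero_of_eventually_le
    (hAF.mono fun T h => by
      linarith [measureReal_mono h (μ := μ), measureReal_nonneg (μ := μ) (s := B T)]) hF

lemma limsup_measureReal_sub_le_zero_of_compl [IsProbabilityMeasure μ] (A : ℝ → Set Ω)
    {B C : ℝ → Set Ω} (hCB : ∀ T, C T ⊆ B T)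
    (hC : Tendsto (fun T => μ.real (C T)ᶜ) atTop (𝓝 0)) :
    limsup (fun T => ((μ.real (A T) - μ.real (B T) : ℝ) : EReal)) atTop ≤ 0 := by
  refine limsup_coe_le_zero_of_eventually_le (Eventually.of_forall fun T => ?_) hC
  have hunion := measureReal_union_le (μ := μ) (C T) (C T)ᶜ
  rw [union_compl_self, probReal_univ] at hunion
  linarith [measureReal_mono (hCB T) (μ := μ), measureReal_le_one (μ := μ) (s := A T)]

end Probability

section Growth

variable {V : Type*} [NormedAddCommGroup V] {Θ : Set V} {I : V → V → ℝ≥0∞} {r δ : ℝ}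

lemma GrowthG1.exists_bound (h : GrowthG1 Θ I) (r C : ℝ) :
    ∃ M, ∀ θ ∈ Θ, ‖θ‖ ≤ C → ∀ ϑ ∈ sublevelSet I θ r, ‖ϑ‖ ≤ M := by
  by_contra! hcon
  choose θs hθs hθC ϑs hϑs hϑn using fun n : ℕ => hcon n
  have htop := h θs ϑs hθs ⟨C, hθC⟩
    (tendsto_atTop_mono (fun n => (hϑn n).le) tendsto_natCast_atTop_atTop)
  obtain ⟨n, hn⟩ := (htop.eventually (eventually_gt_nhds ENNReal.ofReal_lt_top)).exists
  exact (hϑs n).not_gt hn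

lemma GrowthG2.exists_bound (h : GrowthG2 Θ I) (r : ℝ) :
    ∃ c, ∀ θ ∈ Θ, c ≤ ‖θ‖ → ∀ ϑ ∈ sublevelSet I θ r, ‖ϑ‖ ≤ c * ‖θ‖ := by
  by_contra! hcon
  choose θs hθs hθc ϑs hϑs hϑn using fun n : ℕ => hcon ((n : ℝ) + 1)
  have hθpos (n : ℕ) : 0 < ‖θs n‖ := by linarith [hθc n, n.cast_nonneg (α := ℝ)]
  have hθtop : Tendsto (fun n => ‖θs n‖) atTop atTop :=
    tendsto_atTop_mono (fun n => by linarith [hθc n]) tendsto_natCast_atTop_atTop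
  have hratio : Tendsto (fun n => ‖ϑs n‖ / ‖θs n‖) atTop atTop :=
    tendsto_atTop_mono (fun n => (le_div_iff₀ (hθpos n)).2 (by nlinarith [hϑn n, hθpos n]))
      tendsto_natCast_atTop_atTop
  have hle : limsup (fun n => I (θs n) (ϑs n)) atTop ≤ ENNReal.ofReal r :=
    limsup_le_of_le (by isBoundedDefault) (Eventually.of_forall hϑs)
  exact (h θs ϑs hθs hθtop hratio ▸ hle).not_gt ENNReal.ofReal_lt_top

lemma exists_norm_lt_of_mem_fatSublevel {θ y : V} (hδ : δ ≠ 0)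
    (hy : y ∈ fatSublevel I θ r δ) : ∃ ϑ ∈ sublevelSet I θ r, ‖y‖ < ‖ϑ‖ + δ := by
  simp only [fatSublevel, hδ, if_false, mem_iUnion₂, mem_ball, dist_eq_norm] at hy
  obtain ⟨ϑ, hϑ, hyϑ⟩ := hy
  exact ⟨ϑ, hϑ, by linarith [norm_sub_norm_le y ϑ]⟩

lemma zero_mem_fatSublevel {θ : V} (hI : I θ 0 = 0) (hδ : 0 < δ) :
    (0 : V) ∈ fatSublevel I θ r δ := by
  simp only [fatSublevel, hδ.ne', if_false, mem_iUnion₂]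
  exact ⟨0, by simp [sublevelSet, hI], mem_ball_self hδ⟩

/-- The scale bound `2c ≤ s` lets `s ‖x - θ‖` absorb the `(G2)` bound `‖ϑ‖ ≤ c ‖θ‖`. -/
lemma norm_le_max_of_smul_norm_sub_lt {c s R : ℝ} {x θ ϑ : V}
    (hc : ∀ θ ∈ Θ, c ≤ ‖θ‖ → ∀ ϑ ∈ sublevelSet I θ r, ‖ϑ‖ ≤ c * ‖θ‖)
    (hs : 2 * c ≤ s) (hs1 : 1 ≤ s) (hδ : 0 < δ) (hx : ‖x‖ ≤ R) (hθ : θ ∈ Θ)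
    (hϑ : ϑ ∈ sublevelSet I θ r) (hlt : s * ‖x - θ‖ < ‖ϑ‖ + δ) :
    ‖θ‖ ≤ max c (2 * R + 2 * δ) := by
  by_cases hcθ : c ≤ ‖θ‖
  · have hϑc := hc θ hθ hcθ ϑ hϑ
    have hθx : ‖θ‖ - R ≤ ‖x - θ‖ := by
      linarith [norm_sub_norm_le θ x, norm_sub_rev θ x]
    have : s * (‖θ‖ - R) ≤ s * ‖x - θ‖ := mul_le_mul_of_nonneg_left hθx (by linarith)
    exact le_max_of_le_right (by nlinarith [norm_nonneg θ])
  · exact le_max_of_le_left (not_le.1 hcθ).le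

end Growth

section ConfidenceBounds

variable {Θ : Set E} {I : E → E → ℝ≥0∞} {r δ : ℝ}

/-- `upperCB` and `lowerCB` are, by definition, the `sSup` and `sInf` of `J` over this set. -/
def feasibleSet (Θ : Set E) (I : E → E → ℝ≥0∞) (r δ s : ℝ) (x : E) : Set E :=
  {θ | θ ∈ Θ ∧ s • (x - θ) ∈ fatSublevel I θ r δ}

lemma eventually_feasibleSet_subset_closedBall (hδ : 0 < δ) (hG1 : GrowthG1 Θ I)
    (hG2 : GrowthG2 Θ I) {a : ℝ → ℝ} (ha : Tendsto a atTop atTop) (R : ℝ) {ζ : ℝ}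
    (hζ : 0 < ζ) :
    ∀ᶠ T in atTop, ∀ x : E, ‖x‖ ≤ R → feasibleSet Θ I r δ (a T) x ⊆ closedBall x ζ := by
  obtain ⟨c, hc⟩ := hG2.exists_bound r
  obtain ⟨M, hM⟩ := hG1.exists_bound r (max c (2 * R + 2 * δ))
  filter_upwards [ha.eventually_ge_atTop (2 * c), ha.eventually_ge_atTop 1,
    ha.eventually_ge_atTop ((M + δ) / ζ)] with T hs hs1 hsM x hx θ ⟨hθ, hfeas⟩
  obtain ⟨ϑ, hϑ, hlt⟩ := exists_norm_lt_of_mem_fatSublevel hδ.ne' hfeas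
  rw [norm_smul, Real.norm_of_nonneg (by linarith)] at hlt
  have hϑM := hM θ hθ (norm_le_max_of_smul_norm_sub_lt hc hs hs1 hδ hx hθ hϑ hlt) ϑ hϑ
  rw [div_le_iff₀ hζ] at hsM
  rw [mem_closedBall, dist_comm, dist_eq_norm]
  exact le_of_mul_le_mul_left (by linarith) (by linarith : (0 : ℝ) < a T)

/-- Since `I_x(0) = 0`, the observation `x` itself is feasible, so the bounds are a sup and
inf over a nonempty set of values of `J` near `J θ0`. -/
lemma eventually_upperCB_le_and_le_lowerCB (hδ : 0 < δ) (hG1 : GrowthG1 Θ I)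
    (hG2 : GrowthG2 Θ I) {a : ℝ → ℝ} (ha : Tendsto a atTop atTop) (hI0 : ∀ θ ∈ Θ, I θ 0 = 0)
    {J : E → ℝ} {θ0 : E} (hJ : ContinuousWithinAt J Θ θ0) {η : ℝ} (hη : 0 < η) :
    ∃ ε > 0, ∀ᶠ T in atTop, ∀ x ∈ Θ, dist x θ0 < ε →
      upperCB Θ I J r δ a T x ≤ J θ0 + η ∧ J θ0 - η ≤ lowerCB Θ I J r δ a T x := by
  obtain ⟨ζ, hζ, hJζ⟩ := Metric.continuousWithinAt_iff.1 hJ η hη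
  refine ⟨ζ / 2, half_pos hζ, ?_⟩
  filter_upwards [eventually_feasibleSet_subset_closedBall hδ hG1 hG2 ha (‖θ0‖ + ζ / 2)
    (half_pos hζ)] with T hT x hx hxθ0
  have hsub := hT x (norm_le_of_mem_closedBall (mem_closedBall.2 hxθ0.le))
  have hJnear : ∀ θ ∈ feasibleSet Θ I r δ (a T) x, |J θ - J θ0| < η := fun θ hθ =>
    hJζ hθ.1 (by linarith [dist_triangle θ x θ0, mem_closedBall.1 (hsub hθ)])
  have hne : (J '' feasibleSet Θ I r δ (a T) x).Nonempty :=
    ⟨J x, x, ⟨hx, by simpa using zero_mem_fatSublevel (hI0 x hx) hδ⟩, rfl⟩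
  refine ⟨csSup_le hne ?_, le_csInf hne ?_⟩ <;> rintro _ ⟨θ, hθ, rfl⟩ <;>
    linarith [abs_lt.1 (hJnear θ hθ)]

end ConfidenceBounds

lemma exists_eventually_mem_of_dist_lt {X α : Type*} [PseudoMetricSpace X] {Θ : Set X}
    {f : ℝ → α → X} {θ0 : X}
    (hdom : IsOpen Θ ∨ ∀ T > (0 : ℝ), ∀ ω, f T ω ∈ Θ) (hθ0 : θ0 ∈ Θ) :
    ∃ ρ > 0, ∀ᶠ T in atTop, ∀ ω, dist (f T ω) θ0 < ρ → f T ω ∈ Θ := by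
  rcases hdom with hopen | hval
  · obtain ⟨ρ, hρ, hball⟩ := Metric.isOpen_iff.1 hopen θ0 hθ0
    exact ⟨ρ, hρ, Eventually.of_forall fun T ω h => hball h⟩
  · exact ⟨1, one_pos, (eventually_gt_atTop 0).mono fun T hT ω _ => hval T hT ω⟩

theorem stmt15_general (Θ : Set E) (I : E → E → ENNReal) (J : E → ℝ)
    (P : E → Measure Ω) (hP : ∀ θ, IsProbabilityMeasure (P θ))
    (θhat : ℝ → Ω → E)
    (b a : ℝ → ℝ) (hbtop : Tendsto b atTop atTop)
    (hatop : Tendsto a atTop atTop)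
    (hG1 : GrowthG1 Θ I) (hG2 : GrowthG2 Θ I)
    (hI0 : ∀ θ ∈ Θ, I θ 0 = 0)
    (hJ : ∀ a0 > (0 : ℝ), ∀ θ0 ∈ Θ, UniformContinuousOn J (Metric.closedBall θ0 a0 ∩ Θ))
    (hdom : IsOpen Θ ∨ ∀ T > (0 : ℝ), ∀ ω : Ω, θhat T ω ∈ Θ)
    (r δ : ℝ) (hr : 0 < r) (hδ : 0 < δ)
    (Hbar Hlow : ℝ → E → ℝ)
    (haccurate : ∀ θ ∈ Θ,
      Filter.limsup
        (fun T => (((b T)⁻¹ : ℝ) : EReal) *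
          ENNReal.log (P θ {ω | ¬(Hlow T (θhat T ω) ≤ J θ ∧ J θ ≤ Hbar T (θhat T ω))}))
        atTop ≤ ((-r : ℝ) : EReal))
    (θ0 θt0 : E) (hθ0 : θ0 ∈ Θ) (hJne : J θt0 ≠ J θ0)
    (hconsP : ∀ ε > (0 : ℝ),
      Tendsto (fun T => (P θ0 {ω | ε ≤ ‖θhat T ω - θ0‖}).toReal) atTop (nhds 0)) :
    Filter.limsup
        (fun T => (((P θ0 {ω | J θt0 ≤ upperCB Θ I J r δ a T (θhat T ω)}).toReal -
          (P θ0 {ω | J θt0 ≤ Hbar T (θhat T ω)}).toReal : ℝ) : EReal)) atTop ≤ 0 ∧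
    Filter.limsup
        (fun T => (((P θ0 {ω | lowerCB Θ I J r δ a T (θhat T ω) ≤ J θt0}).toReal -
          (P θ0 {ω | Hlow T (θhat T ω) ≤ J θt0}).toReal : ℝ) : EReal)) atTop ≤ 0 := by
  have := hP θ0
  have hJθ0 : ContinuousWithinAt J Θ θ0 :=
    ((hJ 1 one_pos θ0 hθ0).continuousOn θ0 ⟨mem_closedBall_self zero_le_one, hθ0⟩)
      |>.mono_of_mem_nhdsWithin (inter_mem
        (mem_nhdsWithin_of_mem_nhds (closedBall_mem_nhds θ0 one_pos)) self_mem_nhdsWithin)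
  set η := |J θt0 - J θ0| / 2 with hη
  obtain ⟨ε, hε, hCB⟩ := eventually_upperCB_le_and_le_lowerCB (r := r) hδ hG1 hG2 hatop hI0
    hJθ0 (half_pos (abs_pos.2 (sub_ne_zero.2 hJne)) : 0 < η)
  obtain ⟨ρ, hρ, hΘ⟩ := exists_eventually_mem_of_dist_lt (f := θhat) hdom hθ0
  have hnear : ∀ᶠ T in atTop, ∀ ω, ¬ min ε ρ ≤ ‖θhat T ω - θ0‖ →
      upperCB Θ I J r δ a T (θhat T ω) ≤ J θ0 + η ∧
        J θ0 - η ≤ lowerCB Θ I J r δ a T (θhat T ω) := by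
    filter_upwards [hCB, hΘ] with T hT hTΘ ω hω
    rw [not_le, lt_min_iff, ← dist_eq_norm] at hω
    exact hT _ (hTΘ ω hω.2) hω.1
  have hcover := tendsto_toReal_zero_of_limsup_log_le (fun _ => measure_ne_top _ _) hbtop hr
    (haccurate θ0 hθ0)
  have hcons := hconsP _ (lt_min hε hρ)
  rcases hJne.lt_or_gt with hlt | hgt
  · have hsep : J θt0 < J θ0 - η := by rw [hη, abs_of_neg (sub_neg.2 hlt)]; linarith
    exact ⟨limsup_measureReal_sub_le_zero_of_compl _ (fun T ω hω => hlt.le.trans hω.2) hcover,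
      limsup_measureReal_sub_le_zero_of_subset _ (hnear.mono fun T h ω hω =>
        not_not.1 fun hfar => hsep.not_ge ((h ω hfar).2.trans hω)) hcons⟩
  · have hsep : J θ0 + η < J θt0 := by rw [hη, abs_of_pos (sub_pos.2 hgt)]; linarith
    exact ⟨limsup_measureReal_sub_le_zero_of_subset _ (hnear.mono fun T h ω hω =>
        not_not.1 fun hfar => hsep.not_ge (hω.trans (h ω hfar).1)) hcons,
      limsup_measureReal_sub_le_zero_of_compl _ (fun T ω hω => hω.1.trans hgt.le) hcover⟩

/-- eventually uniformly most accurate: against any exponentially accurate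
eventually equicontinuous interval family `(H̲_T, H̄_T)`, if `J(θ̃0) ≠ J(θ0)`, `θ̂_T → θ0`
in `P_{θ0}`-probability and `(θ̂_T)` is tight under `P_{θ0}`, then
`limsup [P_{θ0}(J(θ̃0) ≤ J̄^δ_{T,r}(θ̂_T)) − P_{θ0}(J(θ̃0) ≤ H̄_T(θ̂_T))] ≤ 0` and
`limsup [P_{θ0}(J(θ̃0) ≥ J̲^δ_{T,r}(θ̂_T)) − P_{θ0}(J(θ̃0) ≥ H̲_T(θ̂_T))] ≤ 0`. -/
theorem stmt15 (Θ : Set E) (hΘ : Θ.Nonempty) (I : E → E → ENNReal) (J : E → ℝ)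
    [MeasurableSpace E] [BorelSpace E]
    (P : E → Measure Ω) (hP : ∀ θ, IsProbabilityMeasure (P θ))
    (θhat : ℝ → Ω → E) (hθhatmeas : ∀ T, Measurable (θhat T))
    (b a : ℝ → ℝ) (hbpos : ∀ T, 0 < b T) (hbtop : Tendsto b atTop atTop)
    (hadef : ∀ T, a T = Real.sqrt (T / b T)) (hatop : Tendsto a atTop atTop)
    (hG1 : GrowthG1 Θ I) (hG2 : GrowthG2 Θ I)
    (hI0 : ∀ θ ∈ Θ, I θ 0 = 0)
    (hJ : ∀ a0 > (0 : ℝ), ∀ θ0 ∈ Θ, UniformContinuousOn J (Metric.closedBall θ0 a0 ∩ Θ))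
    (hLDPlow : ∀ θ ∈ Θ, LDPLowerAt (P θ) θhat a b (I θ) θ)
    (hdom : IsOpen Θ ∨ ∀ T > (0 : ℝ), ∀ ω : Ω, θhat T ω ∈ Θ)
    (r δ : ℝ) (hr : 0 < r) (hδ : 0 < δ)
    (hmeasU : ∀ T, Measurable (upperCB Θ I J r δ a T))
    (hmeasL : ∀ T, Measurable (lowerCB Θ I J r δ a T))
    (Hbar Hlow : ℝ → E → ℝ)
    (hHbarmeas : ∀ T, Measurable (Hbar T)) (hHlowmeas : ∀ T, Measurable (Hlow T))
    (hHbarequi : ∀ w0 : E, EvEquicontinuousAt Hbar w0)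
    (hHlowequi : ∀ w0 : E, EvEquicontinuousAt Hlow w0)
    (haccurate : ∀ θ ∈ Θ,
      Filter.limsup
        (fun T => (((b T)⁻¹ : ℝ) : EReal) *
          ENNReal.log (P θ {ω | ¬(Hlow T (θhat T ω) ≤ J θ ∧ J θ ≤ Hbar T (θhat T ω))}))
        atTop ≤ ((-r : ℝ) : EReal))
    (θ0 θt0 : E) (hθ0 : θ0 ∈ Θ) (hθt0 : θt0 ∈ Θ) (hJne : J θt0 ≠ J θ0)
    (hconsP : ∀ ε > (0 : ℝ),
      Tendsto (fun T => (P θ0 {ω | ε ≤ ‖θhat T ω - θ0‖}).toReal) atTop (nhds 0))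
    (htight : ∀ ε > (0 : ℝ), ∃ K : Set E, IsCompact K ∧ ∃ T0 : ℝ,
      ∀ T ≥ T0, (P θ0 {ω | θhat T ω ∉ K}).toReal ≤ ε) :
    Filter.limsup
        (fun T => (((P θ0 {ω | J θt0 ≤ upperCB Θ I J r δ a T (θhat T ω)}).toReal -
          (P θ0 {ω | J θt0 ≤ Hbar T (θhat T ω)}).toReal : ℝ) : EReal)) atTop ≤ 0 ∧
    Filter.limsup
        (fun T => (((P θ0 {ω | lowerCB Θ I J r δ a T (θhat T ω) ≤ J θt0}).toReal -
          (P θ0 {ω | Hlow T (θhat T ω) ≤ J θt0}).toReal : ℝ) : EReal)) atTop ≤ 0 :=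
  stmt15_general Θ I J P hP θhat b a hbtop hatop hG1 hG2 hI0 hJ hdom r δ hr hδ Hbar Hlow haccurate
    θ0 θt0 hθ0 hJne hconsP
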